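/- Let η, μ, c₁, c₂, n, a ∈ ℝ with μ ≠ 0 and c₂ ≠ 0, set k₀ = nη/μ and c₀ = (c₁² − k₀²)/(4c₂), and define g(t) = ( nη − e^{nη(t+a)} nη − c₁μ(1 + e^{nη(t+a)}) ) / ( 2 c₂ μ (1 + e^{nη(t+a)}) ) for t ∈ ℝ. Then g is differentiable and satisfies the quadratic (Riccati) auxiliary equation g′(t) = μ ( c₂ g(t)² + c₁ g(t) + c₀ ) for all t ∈ ℝ. -/

import Mathlib

open Real

/-- This is `-tanh (k(t+a)/2)`, a solution of `u' = (k/2)(u² - 1)`. -/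
theorem hasDerivAt_one_sub_exp_div_one_add_exp (k a t : ℝ) :
    HasDerivAt (fun t => (1 - exp (k * (t + a))) / (1 + exp (k * (t + a))))
      (k / 2 * (((1 - exp (k * (t + a))) / (1 + exp (k * (t + a)))) ^ 2 - 1)) t := by
  have hE : HasDerivAt (fun t => exp (k * (t + a))) (exp (k * (t + a)) * k) t := by
    simpa using (((hasDerivAt_id t).add_const a).const_mul k).exp
  have hpos : 1 + exp (k * (t + a)) ≠ 0 := by positivity
  refine ((hE.const_sub 1).div (hE.const_add 1) hpos).congr_deriv ?_
  field_simp
  ring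

/-- Completing the square: `c₂ g² + c₁ g + c₀ = c₂ (g + c₁/(2c₂))² - (k/μ)²/(4c₂)`. -/
theorem hasDerivAt_riccati_of_affine {u : ℝ → ℝ} {k μ c₁ c₂ t : ℝ} (hμ : μ ≠ 0) (hc₂ : c₂ ≠ 0)
    (hu : HasDerivAt u (k / 2 * (u t ^ 2 - 1)) t) :
    HasDerivAt (fun t => (k * u t - c₁ * μ) / (2 * c₂ * μ))
      (μ * (c₂ * ((k * u t - c₁ * μ) / (2 * c₂ * μ)) ^ 2
        + c₁ * ((k * u t - c₁ * μ) / (2 * c₂ * μ)) + (c₁ ^ 2 - (k / μ) ^ 2) / (4 * c₂))) t := by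
  refine ((hu.const_mul k).sub_const (c₁ * μ)).div_const (2 * c₂ * μ) |>.congr_deriv ?_
  field_simp
  ring

/-- With `k₀ = nη/μ` and `c₀ = (c₁² − k₀²)/(4c₂)`, the function
`g(t) = (nη − e^{nη(t+a)} nη − c₁μ(1 + e^{nη(t+a)})) / (2c₂μ(1 + e^{nη(t+a)}))`
satisfies the quadratic (Riccati) auxiliary equation
`g′(t) = μ(c₂ g(t)² + c₁ g(t) + c₀)` for all `t ∈ ℝ`. -/
theorem quadratic_auxiliary_equation_solution
    (η μ c₁ c₂ n a k₀ c₀ : ℝ) (hμ : μ ≠ 0) (hc₂ : c₂ ≠ 0)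
    (hk₀ : k₀ = n * η / μ) (hc₀ : c₀ = (c₁ ^ 2 - k₀ ^ 2) / (4 * c₂))
    (g : ℝ → ℝ)
    (hg : g = fun t =>
      (n * η - Real.exp (n * η * (t + a)) * (n * η)
          - c₁ * μ * (1 + Real.exp (n * η * (t + a))))
        / (2 * c₂ * μ * (1 + Real.exp (n * η * (t + a))))) :
    ∀ t : ℝ, HasDerivAt g (μ * (c₂ * g t ^ 2 + c₁ * g t + c₀)) t := by
  intro t
  set u := fun t => (1 - exp (n * η * (t + a))) / (1 + exp (n * η * (t + a)))
  have hg_affine : g = fun t => (n * η * u t - c₁ * μ) / (2 * c₂ * μ) := by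
    funext s
    have hpos : 1 + exp (n * η * (s + a)) ≠ 0 := by positivity
    simp only [hg, u]
    field_simp
  subst hc₀ hk₀
  rw [hg_affine]
  exact hasDerivAt_riccati_of_affine hμ hc₂ (hasDerivAt_one_sub_exp_div_one_add_exp _ a t)
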